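/- arXiv:1405.6802 — 3 statements merged into one kernel-verified Lean document; each statement's English description precedes it below -/
import Mathlib

section
/- Let B > 0, μ > 0, μ₁ > 0 and g be real numbers, set b_n = B·μ^n·μ₁^{√n}·n^g for n ≥ 1 and r_n = b_n/b_{n−1}. Define the modified ratios intercept_n = (√n·r_n − √(n−1)·r_{n−1})/(√n − √(n−1)) for n ≥ 3. Then intercept_n = μ·(1 + O(1/n)) as n → ∞; that is, intercept_n/μ − 1 is O(n^{−1}). -/
/-!
With `L = log μ₁` the ratios are `r n = μ * exp (h n)`, where
`h x = L (√x - √(x - 1)) + g (log x - log (x - 1))`. So `intercept n / μ` is the slope of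
`√x * exp (h x)` against `√x` over `[n - 1, n]`, which by Cauchy's mean value theorem is
`exp (h c) * (1 + 2 c h' c)` for some `c ∈ (n - 1, n)`. Here `h c = O(c^(-1/2))`, while in
`h c + 2 c h' c` the terms of order `c^(-1/2)` cancel and leave `O(1/c)`; the decomposition
`exp h (1 + v) - 1 = (exp h - 1 - h) - h (exp h - 1) + exp h (h + v)` then gives `O(1/c)`.
-/

open Real Set Asymptotics Filter

lemma sqrt_sub_sqrt_sub_one_eq_inv {x : ℝ} (hx : 1 ≤ x) :
    √x - √(x - 1) = (√x + √(x - 1))⁻¹ := by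
  refine eq_inv_of_mul_eq_one_left ?_
  have h₁ := sq_sqrt (by linarith : (0:ℝ) ≤ x)
  have h₂ := sq_sqrt (by linarith : (0:ℝ) ≤ x - 1)
  linear_combination h₁ - h₂

lemma sqrt_sub_sqrt_sub_one_nonneg (x : ℝ) : 0 ≤ √x - √(x - 1) :=
  sub_nonneg.2 (sqrt_le_sqrt (by linarith))

lemma sqrt_sub_sqrt_sub_one_le {x : ℝ} (hx : 1 < x) : √x - √(x - 1) ≤ (2 * √(x - 1))⁻¹ := by
  rw [sqrt_sub_sqrt_sub_one_eq_inv hx.le]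
  have hpos : 0 < √(x - 1) := sqrt_pos.2 (by linarith)
  have hle : √(x - 1) ≤ √x := sqrt_le_sqrt (by linarith)
  exact inv_anti₀ (by positivity) (by linarith)

lemma log_sub_log_sub_one_nonneg {x : ℝ} (hx : 1 < x) : 0 ≤ log x - log (x - 1) :=
  sub_nonneg.2 (log_le_log (by linarith) (by linarith))

lemma log_sub_log_sub_one_le {x : ℝ} (hx : 1 < x) : log x - log (x - 1) ≤ (x - 1)⁻¹ := by
  have hx₁ : 0 < x - 1 := by linarith
  calc log x - log (x - 1) = log (x / (x - 1)) := (log_div (by linarith) hx₁.ne').symm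
    _ ≤ x / (x - 1) - 1 := log_le_sub_one_of_pos (by positivity)
    _ = (x - 1)⁻¹ := by field_simp; ring

lemma abs_sqrt_sub_sqrt_sub_one_add_le {x : ℝ} (hx : 2 ≤ x) :
    |√x - √(x - 1) + 2 * x * ((2 * √x)⁻¹ - (2 * √(x - 1))⁻¹)| ≤ (x - 1)⁻¹ := by
  have hx₁ : 1 ≤ √(x - 1) := one_le_sqrt.2 (by linarith)
  have h₁ := sq_sqrt (by linarith : (0:ℝ) ≤ x)
  have h₂ := sq_sqrt (by linarith : (0:ℝ) ≤ x - 1)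
  have hS := sqrt_sub_sqrt_sub_one_le (by linarith : 1 < x)
  have hS₀ := sqrt_sub_sqrt_sub_one_nonneg x
  have key : √x - √(x - 1) + 2 * x * ((2 * √x)⁻¹ - (2 * √(x - 1))⁻¹) =
      -((√x - √(x - 1)) ^ 2 / √(x - 1)) := by
    field_simp
    linear_combination (√x - √(x - 1)) * h₁
  have hsq : (√x - √(x - 1)) ^ 2 ≤ (4 * (x - 1))⁻¹ := by
    calc (√x - √(x - 1)) ^ 2 ≤ ((2 * √(x - 1))⁻¹) ^ 2 := pow_le_pow_left₀ hS₀ hS 2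
      _ = (4 * (x - 1))⁻¹ := by rw [inv_pow, mul_pow, h₂]; norm_num
  rw [key, abs_neg, abs_of_nonneg (by positivity)]
  calc (√x - √(x - 1)) ^ 2 / √(x - 1) ≤ (√x - √(x - 1)) ^ 2 := div_le_self (by positivity) hx₁
    _ ≤ (4 * (x - 1))⁻¹ := hsq
    _ ≤ (x - 1)⁻¹ := inv_anti₀ (by linarith) (by linarith)

lemma abs_log_sub_log_sub_one_add_le {x : ℝ} (hx : 1 < x) :
    |log x - log (x - 1) + 2 * x * (x⁻¹ - (x - 1)⁻¹)| ≤ 2 * (x - 1)⁻¹ := by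
  have hx₁ : 0 < x - 1 := by linarith
  have key : 2 * x * (x⁻¹ - (x - 1)⁻¹) = -2 * (x - 1)⁻¹ := by field_simp; ring
  rw [key, abs_le]
  constructor <;> linarith [log_sub_log_sub_one_nonneg hx, log_sub_log_sub_one_le hx, inv_pos.2 hx₁]

lemma inv_sub_one_le_two_mul_inv {x : ℝ} (hx : 2 ≤ x) : (x - 1)⁻¹ ≤ 2 * x⁻¹ :=
  calc (x - 1)⁻¹ ≤ (x / 2)⁻¹ := inv_anti₀ (by positivity) (by linarith)
    _ = 2 * x⁻¹ := by rw [inv_div, div_eq_mul_inv]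

noncomputable def ratioExponent (L g x : ℝ) : ℝ :=
  L * (√x - √(x - 1)) + g * (log x - log (x - 1))

noncomputable def ratioExponentDeriv (L g x : ℝ) : ℝ :=
  L * ((2 * √x)⁻¹ - (2 * √(x - 1))⁻¹) + g * (x⁻¹ - (x - 1)⁻¹)

section ratioExponent

variable (L g : ℝ) {x : ℝ}

lemma hasDerivAt_ratioExponent (hx : 1 < x) :
    HasDerivAt (ratioExponent L g) (ratioExponentDeriv L g x) x := by
  have hx₀ : x ≠ 0 := by positivity
  have hx₁ : x - 1 ≠ 0 := sub_ne_zero.2 hx.ne'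
  have hsub := (hasDerivAt_id x).sub_const 1
  have hsqrt := (hasDerivAt_sqrt hx₀).sub (hsub.sqrt hx₁)
  have hlog := (hasDerivAt_log hx₀).sub (hsub.log hx₁)
  refine ((hsqrt.const_mul L).add (hlog.const_mul g)).congr_deriv ?_
  simp [ratioExponentDeriv]

lemma sq_ratioExponent_le (hx : 2 ≤ x) :
    ratioExponent L g x ^ 2 ≤ (|L| + |g|) ^ 2 * (x - 1)⁻¹ := by
  have ht : 1 ≤ √(x - 1) := one_le_sqrt.2 (by linarith)
  have hS : √x - √(x - 1) ≤ (√(x - 1))⁻¹ :=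
    (sqrt_sub_sqrt_sub_one_le (by linarith)).trans (inv_anti₀ (by positivity) (by linarith))
  have hℓ : log x - log (x - 1) ≤ (√(x - 1))⁻¹ := by
    refine (log_sub_log_sub_one_le (by linarith)).trans (inv_anti₀ (by positivity) ?_)
    calc √(x - 1) ≤ √(x - 1) * √(x - 1) := le_mul_of_one_le_left (by positivity) ht
      _ = x - 1 := mul_self_sqrt (by linarith)
  have habs : |ratioExponent L g x| ≤ (|L| + |g|) * (√(x - 1))⁻¹ := by
    calc |ratioExponent L g x|
        ≤ |L| * (√x - √(x - 1)) + |g| * (log x - log (x - 1)) := by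
          have h := abs_add_le (L * (√x - √(x - 1))) (g * (log x - log (x - 1)))
          rwa [abs_mul, abs_mul, abs_of_nonneg (sqrt_sub_sqrt_sub_one_nonneg x),
            abs_of_nonneg (log_sub_log_sub_one_nonneg (by linarith))] at h
      _ ≤ (|L| + |g|) * (√(x - 1))⁻¹ := by
          rw [add_mul]
          exact add_le_add (mul_le_mul_of_nonneg_left hS (abs_nonneg L))
            (mul_le_mul_of_nonneg_left hℓ (abs_nonneg g))
  calc ratioExponent L g x ^ 2 = |ratioExponent L g x| ^ 2 := (sq_abs _).symm
    _ ≤ ((|L| + |g|) * (√(x - 1))⁻¹) ^ 2 := pow_le_pow_left₀ (abs_nonneg _) habs 2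
    _ = (|L| + |g|) ^ 2 * (x - 1)⁻¹ := by rw [mul_pow, inv_pow, sq_sqrt (by linarith)]

lemma abs_ratioExponent_add_deriv_le (hx : 2 ≤ x) :
    |ratioExponent L g x + 2 * x * ratioExponentDeriv L g x| ≤ (|L| + 2 * |g|) * (x - 1)⁻¹ := by
  have hsplit : ratioExponent L g x + 2 * x * ratioExponentDeriv L g x =
      L * (√x - √(x - 1) + 2 * x * ((2 * √x)⁻¹ - (2 * √(x - 1))⁻¹)) +
        g * (log x - log (x - 1) + 2 * x * (x⁻¹ - (x - 1)⁻¹)) := by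
    rw [ratioExponent, ratioExponentDeriv]; ring
  rw [hsplit]
  refine (abs_add_le _ _).trans ?_
  rw [abs_mul, abs_mul]
  calc _ ≤ |L| * (x - 1)⁻¹ + |g| * (2 * (x - 1)⁻¹) := by
        gcongr
        · exact abs_sqrt_sub_sqrt_sub_one_add_le hx
        · exact abs_log_sub_log_sub_one_add_le (by linarith)
    _ = (|L| + 2 * |g|) * (x - 1)⁻¹ := by ring

end ratioExponent

lemma abs_exp_mul_one_add_sub_one_le {u v : ℝ} (hu : |u| ≤ 1) :
    |exp u * (1 + v) - 1| ≤ 3 * u ^ 2 + 3 * |u + v| := by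
  have h₁ : |exp u - 1 - u| ≤ u ^ 2 := abs_exp_sub_one_sub_id_le hu
  have h₂ : |exp u - 1| ≤ 2 * |u| := abs_exp_sub_one_le hu
  have h₃ : exp u ≤ 3 := by
    linarith [exp_le_exp.2 (le_of_abs_le hu), exp_one_lt_d9]
  have hsplit : exp u * (1 + v) - 1 = (exp u - 1 - u) - u * (exp u - 1) + exp u * (u + v) := by ring
  calc |exp u * (1 + v) - 1|
      ≤ |exp u - 1 - u| + |u| * |exp u - 1| + exp u * |u + v| := by
        have h₄ := abs_add_le (exp u - 1 - u - u * (exp u - 1)) (exp u * (u + v))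
        have h₅ := abs_sub (exp u - 1 - u) (u * (exp u - 1))
        rw [abs_mul, abs_of_pos (exp_pos u)] at h₄
        rw [abs_mul] at h₅
        rw [hsplit]
        linarith
    _ ≤ u ^ 2 + |u| * (2 * |u|) + 3 * |u + v| := by gcongr
    _ = 3 * u ^ 2 + 3 * |u + v| := by rw [← sq_abs u]; ring

lemma exists_sqrt_mul_slope_eq {f f' : ℝ → ℝ} {a b : ℝ} (ha : 0 ≤ a) (hab : a < b)
    (hfc : ContinuousOn f (Icc a b)) (hf : ∀ x ∈ Ioo a b, HasDerivAt f (f' x) x) :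
    ∃ c ∈ Ioo a b, (√b * f b - √a * f a) / (√b - √a) = f c + 2 * c * f' c := by
  have hsqrt : ∀ x ∈ Ioo a b, HasDerivAt sqrt (1 / (2 * √x)) x :=
    fun x hx => hasDerivAt_sqrt (by linarith [hx.1])
  obtain ⟨c, hc, hslope⟩ := exists_ratio_hasDerivAt_eq_ratio_slope (fun x => √x * f x)
    (fun x => 1 / (2 * √x) * f x + √x * f' x) hab (continuous_sqrt.continuousOn.mul hfc)
    (fun x hx => (hsqrt x hx).mul (hf x hx)) sqrt (fun x => 1 / (2 * √x))
    continuous_sqrt.continuousOn hsqrt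
  have hc₀ : 0 < √c := sqrt_pos.2 (by linarith [hc.1])
  have hba : 0 < √b - √a := sub_pos.2 (sqrt_lt_sqrt ha hab)
  refine ⟨c, hc, ?_⟩
  rw [div_eq_iff hba.ne']
  field_simp at hslope
  rw [sq_sqrt (by linarith [hc.1])] at hslope
  linear_combination -hslope

lemma isBigO_exp_ratioExponent_mul_sub_one (L g : ℝ) :
    (fun x => exp (ratioExponent L g x) * (1 + 2 * x * ratioExponentDeriv L g x) - 1)
      =O[atTop] fun x => x⁻¹ := by
  set M := |L| + |g|
  set K := 3 * M ^ 2 + 3 * (|L| + 2 * |g|)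
  refine IsBigO.of_bound (2 * K) ?_
  filter_upwards [eventually_ge_atTop (M ^ 2 + 2)] with x hx
  have hM : 0 ≤ M := by positivity
  have hx₂ : 2 ≤ x := by nlinarith
  have hsq := sq_ratioExponent_le L g hx₂
  have hsmall : |ratioExponent L g x| ≤ 1 := by
    refine sq_le_one_iff_abs_le_one _ |>.1 (hsq.trans ?_)
    rw [← div_eq_mul_inv, div_le_one (by linarith)]
    linarith
  rw [norm_of_nonneg (inv_nonneg.2 (by linarith)), Real.norm_eq_abs]
  calc _ ≤ 3 * ratioExponent L g x ^ 2 + 3 * |ratioExponent L g x + 2 * x * ratioExponentDeriv L g x| :=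
        abs_exp_mul_one_add_sub_one_le hsmall
    _ ≤ 3 * (M ^ 2 * (x - 1)⁻¹) + 3 * ((|L| + 2 * |g|) * (x - 1)⁻¹) := by
        gcongr
        exact abs_ratioExponent_add_deriv_le L g hx₂
    _ = K * (x - 1)⁻¹ := by ring
    _ ≤ K * (2 * x⁻¹) := by gcongr; exact inv_sub_one_le_two_mul_inv hx₂
    _ = 2 * K * x⁻¹ := by ring

lemma div_eq_mul_exp_ratioExponent {B μ μ₁ g : ℝ} (hB : 0 < B) (hμ : 0 < μ) (hμ₁ : 0 < μ₁)
    {n : ℕ} (hn : 2 ≤ n) :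
    B * μ ^ n * μ₁ ^ √(n : ℝ) * (n : ℝ) ^ g /
        (B * μ ^ (n - 1) * μ₁ ^ √((n - 1 : ℕ) : ℝ) * ((n - 1 : ℕ) : ℝ) ^ g) =
      μ * exp (ratioExponent (log μ₁) g n) := by
  obtain ⟨m, rfl⟩ : ∃ m, n = m + 1 := ⟨n - 1, by omega⟩
  have hm : (0 : ℝ) < m := by exact_mod_cast (by omega : 0 < m)
  simp only [Nat.add_sub_cancel, ratioExponent]
  push_cast
  rw [add_sub_cancel_right, rpow_def_of_pos hμ₁, rpow_def_of_pos hμ₁, rpow_def_of_pos (by positivity),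
    rpow_def_of_pos hm, pow_succ, div_eq_iff (by positivity), mul_sub, mul_sub, exp_add, exp_sub,
    exp_sub]
  field_simp

lemma exists_sqrt_mul_exp_ratioExponent_slope_eq (L g : ℝ) {x : ℝ} (hx : 2 < x) :
    ∃ c ∈ Ioo (x - 1) x,
      (√x * exp (ratioExponent L g x) - √(x - 1) * exp (ratioExponent L g (x - 1))) /
          (√x - √(x - 1)) =
        exp (ratioExponent L g c) * (1 + 2 * c * ratioExponentDeriv L g c) := by
  have hderiv : ∀ y ∈ Icc (x - 1) x, HasDerivAt (fun y => exp (ratioExponent L g y))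
      (exp (ratioExponent L g y) * ratioExponentDeriv L g y) y :=
    fun y hy => (hasDerivAt_ratioExponent L g (by linarith [hy.1])).exp
  obtain ⟨c, hc, hslope⟩ := exists_sqrt_mul_slope_eq (by linarith) (by linarith : x - 1 < x)
    (fun y hy => (hderiv y hy).continuousAt.continuousWithinAt)
    (fun y hy => hderiv y (Ioo_subset_Icc_self hy))
  exact ⟨c, hc, hslope.trans (by ring)⟩

/-- The modified ratios (square-root intercepts) converge to μ at rate O(1/n). -/
theorem intercept_estimate (B μ μ₁ g : ℝ) (hB : 0 < B) (hμ : 0 < μ) (hμ₁ : 0 < μ₁)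
    (b r intercept : ℕ → ℝ)
    (hb : ∀ n : ℕ, 1 ≤ n → b n = B * μ ^ n * μ₁ ^ Real.sqrt n * (n : ℝ) ^ g)
    (hr : ∀ n : ℕ, 2 ≤ n → r n = b n / b (n - 1))
    (hint : ∀ n : ℕ, 3 ≤ n → intercept n =
      (Real.sqrt n * r n - Real.sqrt (n - 1 : ℕ) * r (n - 1)) /
        (Real.sqrt n - Real.sqrt (n - 1 : ℕ))) :
    (fun n : ℕ => intercept n / μ - 1) =O[atTop] fun n : ℕ => ((n : ℝ))⁻¹ := by
  have hr_exp : ∀ n, 2 ≤ n → r n = μ * exp (ratioExponent (log μ₁) g n) := fun n hn => by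
    rw [hr n hn, hb n (by omega), hb (n - 1) (by omega)]
    exact div_eq_mul_exp_ratioExponent hB hμ hμ₁ hn
  obtain ⟨C, hC₀, hC⟩ := (isBigO_exp_ratioExponent_mul_sub_one (log μ₁) g).exists_nonneg
  obtain ⟨x₀, hx₀⟩ := eventually_atTop.1 hC.bound
  refine IsBigO.of_bound (2 * C) ?_
  filter_upwards [eventually_ge_atTop 3,
    tendsto_natCast_atTop_atTop.eventually_ge_atTop (x₀ + 2)] with n hn hn₀
  have hn₃ : (3 : ℝ) ≤ n := by exact_mod_cast hn
  obtain ⟨c, ⟨hc₁, -⟩, hc⟩ := exists_sqrt_mul_exp_ratioExponent_slope_eq (log μ₁) g (x := n)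
    (by linarith)
  have hcast : ((n - 1 : ℕ) : ℝ) = n - 1 := by rw [Nat.cast_sub (by omega), Nat.cast_one]
  have hintercept : intercept n / μ = exp (ratioExponent (log μ₁) g c) *
      (1 + 2 * c * ratioExponentDeriv (log μ₁) g c) := by
    rw [hint n (by omega), hr_exp n (by omega), hr_exp (n - 1) (by omega), hcast, ← hc]
    field_simp
  have hcn : c⁻¹ ≤ 2 * (n : ℝ)⁻¹ :=
    (inv_anti₀ (by linarith) hc₁.le).trans (inv_sub_one_le_two_mul_inv (by linarith))
  rw [hintercept]
  refine (hx₀ c (by linarith)).trans ?_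
  rw [norm_inv, norm_inv, Real.norm_of_nonneg (by linarith), Real.norm_natCast]
  calc C * c⁻¹ ≤ C * (2 * (n : ℝ)⁻¹) := mul_le_mul_of_nonneg_left hcn hC₀
    _ = 2 * C * (n : ℝ)⁻¹ := by ring
end

section
/- Let B > 0, μ > 0, μ₁ > 0, g be real numbers and 0 < σ < 1, and set b_n = B·μ^n·μ₁^{n^σ}·n^g for n ≥ 1. Then the second-order ratio r_{σ,n} = (b_n·b_{n−2})/(b_{n−1})^2 satisfies, as n → ∞, r_{σ,n} − 1 − σ(σ−1)·(log μ₁)·n^{σ−2} = O(n^{−2}); in particular this expansion does not involve μ. -/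
/-!
Write `b n = exp (ℓ n)` with `ℓ x = log B + x log μ + x^σ log μ₁ + g log x`. Then `r_{σ,n}` is
the exponential of the backward second difference `ℓ n - 2 ℓ (n-1) + ℓ (n-2)`, which kills the
affine part of `ℓ` and with it `μ`. Two applications of the mean value theorem give
`f x - 2 f (x-1) + f (x-2) = f'' d` for some `d ∈ (x-2, x)`, whence the second difference of
`x^σ` is `σ(σ-1) x^{σ-2} + O(x^{σ-3})` and that of `log` is `O(x^{-2})`. So the exponent is
`O(1/x)`, and `exp t = 1 + t + O(t²)` finishes the expansion.
-/

open Asymptotics Filter Set Real Topology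

def backwardSecondDiff (f : ℝ → ℝ) (x : ℝ) : ℝ := f x - 2 * f (x - 1) + f (x - 2)

section MeanValue

variable {f f' f'' : ℝ → ℝ} {a : ℝ}

theorem exists_backwardSecondDiff_eq_of_hasDerivAt
    (hf : ∀ x ∈ Icc (a - 2) a, HasDerivAt f (f' x) x)
    (hf' : ∀ x ∈ Icc (a - 2) a, HasDerivAt f' (f'' x) x) :
    ∃ d ∈ Ioo (a - 2) a, backwardSecondDiff f a = f'' d := by
  have hdiff : ∀ x ∈ Icc (a - 1) a,
      HasDerivAt (fun y => f y - f (y - 1)) (f' x - f' (x - 1)) x := fun x hx =>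
    (hf x ⟨by linarith [hx.1], hx.2⟩).sub <| by
      simpa using (hf (x - 1) ⟨by linarith [hx.1], by linarith [hx.2]⟩).comp_sub_const x 1
  obtain ⟨c, hc, hc_eq⟩ := exists_hasDerivAt_eq_slope _ _ (by linarith : a - 1 < a)
    (fun x hx => (hdiff x hx).continuousAt.continuousWithinAt)
    (fun x hx => hdiff x (Ioo_subset_Icc_self hx))
  obtain ⟨d, hd, hd_eq⟩ := exists_hasDerivAt_eq_slope f' f'' (by linarith : c - 1 < c)
    (fun x hx => (hf' x ⟨by linarith [hx.1, hc.1], by linarith [hx.2, hc.2]⟩).continuousAt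
      |>.continuousWithinAt)
    (fun x hx => hf' x ⟨by linarith [hx.1, hc.1], by linarith [hx.2, hc.2]⟩)
  refine ⟨d, ⟨by linarith [hd.1, hc.1], by linarith [hd.2, hc.2]⟩, ?_⟩
  rw [sub_sub_cancel, div_one] at hc_eq hd_eq
  rw [backwardSecondDiff, hd_eq, hc_eq, show a - 1 - 1 = a - 2 by ring]
  ring

theorem abs_backwardSecondDiff_sub_le_of_hasDerivAt {f''' : ℝ → ℝ} {M : ℝ}
    (hf : ∀ x ∈ Icc (a - 2) a, HasDerivAt f (f' x) x)
    (hf' : ∀ x ∈ Icc (a - 2) a, HasDerivAt f' (f'' x) x)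
    (hf'' : ∀ x ∈ Icc (a - 2) a, HasDerivAt f'' (f''' x) x)
    (hM : ∀ x ∈ Icc (a - 2) a, |f''' x| ≤ M) :
    |backwardSecondDiff f a - f'' a| ≤ 2 * M := by
  obtain ⟨d, hd, hd_eq⟩ := exists_backwardSecondDiff_eq_of_hasDerivAt hf hf'
  have hmem : a ∈ Icc (a - 2) a := ⟨by linarith, le_rfl⟩
  have hM0 : 0 ≤ M := (abs_nonneg _).trans (hM a hmem)
  have hmvt := (convex_Icc (a - 2) a).norm_image_sub_le_of_norm_hasDerivWithin_le
    (fun x hx => (hf'' x hx).hasDerivWithinAt) hM (Ioo_subset_Icc_self hd) hmem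
  rw [Real.norm_eq_abs, Real.norm_eq_abs, abs_of_pos (sub_pos.2 hd.2)] at hmvt
  rw [hd_eq, abs_sub_comm]
  nlinarith [hd.1]

end MeanValue

theorem exp_backwardSecondDiff (f : ℝ → ℝ) (x : ℝ) :
    exp (backwardSecondDiff f x) = exp (f x) * exp (f (x - 2)) / exp (f (x - 1)) ^ 2 := by
  rw [backwardSecondDiff, exp_add, exp_sub, ← exp_nat_mul]
  push_cast
  ring

theorem isBigO_rpow_rpow_atTop_of_le {r s : ℝ} (hrs : r ≤ s) :
    (· ^ r) =O[atTop] fun x : ℝ => x ^ s :=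
  IsBigO.of_bound 1 <| (eventually_ge_atTop 1).mono fun x hx => by
    rw [norm_of_nonneg (rpow_nonneg (by linarith) _), norm_of_nonneg (rpow_nonneg (by linarith) _),
      one_mul]
    exact rpow_le_rpow_of_exponent_le hx hrs

theorem isBigO_sub_const_rpow_atTop {c r : ℝ} (hc : 0 ≤ c) (hr : r ≤ 0) :
    (fun x : ℝ => (x - c) ^ r) =O[atTop] (· ^ r) := by
  refine IsBigO.of_bound (2 ^ r)⁻¹ <| (eventually_ge_atTop (2 * c + 1)).mono fun x hx => ?_
  have hhalf : x / 2 ≤ x - c := by linarith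
  have hx0 : 0 < x / 2 := by linarith
  rw [norm_of_nonneg (rpow_nonneg (by linarith) _), norm_of_nonneg (rpow_nonneg (by linarith) _)]
  calc (x - c) ^ r ≤ (x / 2) ^ r := rpow_le_rpow_of_nonpos hx0 hhalf hr
    _ = (2 ^ r)⁻¹ * x ^ r := by rw [div_rpow (by linarith) zero_le_two, div_eq_inv_mul]

theorem isBigO_exp_sub_one_sub_sq {α : Type*} {l : Filter α} {u : α → ℝ}
    (hu : Tendsto u l (𝓝 0)) :
    (fun t => exp (u t) - 1 - u t) =O[l] fun t => u t ^ 2 := by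
  have := (exp_sub_sum_range_isBigO_pow 2).comp_tendsto hu
  simpa [Function.comp_def, Finset.sum_range_succ, sub_sub] using this

theorem isBigO_backwardSecondDiff_rpow_sub {p : ℝ} (hp : p ≤ 3) :
    (fun x => backwardSecondDiff (· ^ p) x - p * (p - 1) * x ^ (p - 2)) =O[atTop]
      (· ^ (p - 3)) := by
  have hderiv : ∀ c q x : ℝ, 0 < x → HasDerivAt (fun y => c * y ^ q) (c * q * x ^ (q - 1)) x :=
    fun c q x hx => by
      simpa only [mul_assoc] using (hasDerivAt_rpow_const (p := q) (Or.inl hx.ne')).const_mul c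
  have hbound : ∀ x ≥ 3, |backwardSecondDiff (· ^ p) x - p * (p - 1) * x ^ (p - 2)|
      ≤ 2 * (|p * (p - 1) * (p - 2)| * (x - 2) ^ (p - 3)) := fun x hx => by
    have hpos : ∀ y ∈ Icc (x - 2) x, 0 < y := fun y hy => by linarith [hy.1]
    refine abs_backwardSecondDiff_sub_le_of_hasDerivAt (f' := fun y => p * y ^ (p - 1))
      (f'' := fun y => p * (p - 1) * y ^ (p - 2))
      (f''' := fun y => p * (p - 1) * (p - 2) * y ^ (p - 3))
      (fun y hy => hasDerivAt_rpow_const (Or.inl (hpos y hy).ne'))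
      (fun y hy => by rw [show p - 2 = p - 1 - 1 by ring]; exact hderiv p (p - 1) y (hpos y hy))
      (fun y hy => by
        rw [show p - 3 = p - 2 - 1 by ring]; exact hderiv (p * (p - 1)) (p - 2) y (hpos y hy))
      (fun y hy => ?_)
    rw [abs_mul, abs_of_pos (rpow_pos_of_pos (hpos y hy) _)]
    exact mul_le_mul_of_nonneg_left
      (rpow_le_rpow_of_nonpos (by linarith) hy.1 (by linarith)) (abs_nonneg _)
  refine IsBigO.trans ?_ (isBigO_sub_const_rpow_atTop zero_le_two (by linarith))
  refine IsBigO.of_bound (2 * |p * (p - 1) * (p - 2)|) <|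
    (eventually_ge_atTop 3).mono fun x hx => ?_
  rw [Real.norm_eq_abs, Real.norm_eq_abs, abs_of_pos (rpow_pos_of_pos (by linarith) _)]
  exact (hbound x hx).trans_eq (by ring)

theorem isBigO_backwardSecondDiff_log :
    backwardSecondDiff log =O[atTop] (· ^ (-2 : ℝ)) := by
  refine IsBigO.trans ?_ (isBigO_sub_const_rpow_atTop zero_le_two (by norm_num))
  refine IsBigO.of_bound 1 <| (eventually_ge_atTop 3).mono fun x hx => ?_
  have hpos : ∀ y ∈ Icc (x - 2) x, 0 < y := fun y hy => by linarith [hy.1]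
  obtain ⟨d, hd, hd_eq⟩ := exists_backwardSecondDiff_eq_of_hasDerivAt
    (f' := (· ^ (-1 : ℝ))) (f'' := fun y => -1 * y ^ ((-1 : ℝ) - 1))
    (fun y hy => by simpa [rpow_neg_one] using hasDerivAt_log (hpos y hy).ne')
    (fun y hy => hasDerivAt_rpow_const (Or.inl (hpos y hy).ne'))
  have hd0 : 0 < d := hpos d (Ioo_subset_Icc_self hd)
  rw [hd_eq, one_mul, Real.norm_eq_abs, Real.norm_eq_abs, neg_one_mul, abs_neg,
    show (-1 : ℝ) - 1 = -2 by norm_num, abs_of_pos (rpow_pos_of_pos hd0 _),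
    abs_of_pos (rpow_pos_of_pos (by linarith) _)]
  exact rpow_le_rpow_of_nonpos (by linarith) hd.1.le (by norm_num)

theorem isBigO_exp_backwardSecondDiff_sub {σ : ℝ} (hσ : σ ≤ 1) (a c : ℝ) :
    (fun x => exp (a * backwardSecondDiff (· ^ σ) x + c * backwardSecondDiff log x) - 1
      - σ * (σ - 1) * a * x ^ (σ - 2)) =O[atTop] (· ^ (-2 : ℝ)) := by
  set E := fun x => a * backwardSecondDiff (· ^ σ) x + c * backwardSecondDiff log x
  set R := fun x => a * (backwardSecondDiff (· ^ σ) x - σ * (σ - 1) * x ^ (σ - 2))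
    + c * backwardSecondDiff log x
  have hR : R =O[atTop] (· ^ (-2 : ℝ)) :=
    (((isBigO_backwardSecondDiff_rpow_sub (by linarith)).trans
      (isBigO_rpow_rpow_atTop_of_le (by linarith))).const_mul_left a).add
      (isBigO_backwardSecondDiff_log.const_mul_left c)
  have hE_eq : E = fun x => σ * (σ - 1) * a * x ^ (σ - 2) + R x := by
    funext x; simp only [E, R]; ring
  have hE : E =O[atTop] (· ^ (-1 : ℝ)) := by
    rw [hE_eq]
    exact ((isBigO_rpow_rpow_atTop_of_le (by linarith)).const_mul_left _).add
      (hR.trans (isBigO_rpow_rpow_atTop_of_le (by norm_num)))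
  have hE_sq : (fun x => E x ^ 2) =O[atTop] (· ^ (-2 : ℝ)) :=
    (hE.pow 2).trans_eventuallyEq <| (eventually_ge_atTop 0).mono fun x hx => by
      dsimp only
      rw [← rpow_natCast, ← rpow_mul hx]
      norm_num
  refine (((isBigO_exp_sub_one_sub_sq (hE.trans_tendsto (tendsto_rpow_neg_atTop one_pos))).trans
    hE_sq).add hR).congr_left fun x => ?_
  simp only [E, R]
  ring

theorem second_order_ratio_general (B μ μ₁ g σ : ℝ) (hB : 0 < B) (hμ : 0 < μ) (hμ₁ : 0 < μ₁)
    (hσ1 : σ < 1)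
    (b rσ : ℕ → ℝ)
    (hb : ∀ n : ℕ, 1 ≤ n → b n = B * μ ^ n * μ₁ ^ ((n : ℝ) ^ σ) * (n : ℝ) ^ g)
    (hrσ : ∀ n : ℕ, 3 ≤ n → rσ n = b n * b (n - 2) / (b (n - 1)) ^ 2) :
    (fun n : ℕ => rσ n - 1 - σ * (σ - 1) * Real.log μ₁ * (n : ℝ) ^ (σ - 2))
      =O[atTop] fun n : ℕ => (n : ℝ) ^ (-2 : ℝ) := by
  set ℓ : ℝ → ℝ := fun x => log B + log μ * x + log μ₁ * x ^ σ + log x * g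
  have hb_exp : ∀ n : ℕ, 1 ≤ n → b n = exp (ℓ n) := fun n hn => by
    rw [hb n hn, exp_add, exp_add, exp_add, exp_log hB, ← rpow_def_of_pos hμ,
      ← rpow_def_of_pos hμ₁, ← rpow_def_of_pos (Nat.cast_pos.2 hn), rpow_natCast]
  have hr_exp : ∀ n : ℕ, 3 ≤ n → rσ n =
      exp (log μ₁ * backwardSecondDiff (· ^ σ) n + g * backwardSecondDiff log n) := by
    intro n hn
    have hℓ : backwardSecondDiff ℓ n =
        log μ₁ * backwardSecondDiff (· ^ σ) n + g * backwardSecondDiff log n := by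
      simp only [backwardSecondDiff, ℓ]; ring
    rw [hrσ n hn, hb_exp n (by omega), hb_exp (n - 2) (by omega), hb_exp (n - 1) (by omega),
      Nat.cast_sub (by omega), Nat.cast_sub (by omega), Nat.cast_ofNat, Nat.cast_one, ← hℓ,
      exp_backwardSecondDiff]
  refine ((isBigO_exp_backwardSecondDiff_sub hσ1.le (log μ₁) g).comp_tendsto
    tendsto_natCast_atTop_atTop).congr' ?_ (Eventually.of_forall fun _ => rfl)
  filter_upwards [eventually_ge_atTop 3] with n hn
  simp only [Function.comp_apply, hr_exp n hn]

/-- Second-order ratio expansion for `b_n = B μ^n μ₁^{n^σ} n^g`: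
`b_n b_{n-2}/b_{n-1}² = 1 + σ(σ-1) log μ₁ · n^{σ-2} + O(n^{-2})`, independently of μ. -/
theorem second_order_ratio (B μ μ₁ g σ : ℝ) (hB : 0 < B) (hμ : 0 < μ) (hμ₁ : 0 < μ₁)
    (hσ0 : 0 < σ) (hσ1 : σ < 1)
    (b rσ : ℕ → ℝ)
    (hb : ∀ n : ℕ, 1 ≤ n → b n = B * μ ^ n * μ₁ ^ ((n : ℝ) ^ σ) * (n : ℝ) ^ g)
    (hrσ : ∀ n : ℕ, 3 ≤ n → rσ n = b n * b (n - 2) / (b (n - 1)) ^ 2) :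
    (fun n : ℕ => rσ n - 1 - σ * (σ - 1) * Real.log μ₁ * (n : ℝ) ^ (σ - 2))
      =O[atTop] fun n : ℕ => (n : ℝ) ^ (-2 : ℝ) :=
  second_order_ratio_general B μ μ₁ g σ hB hμ hμ₁ hσ1 b rσ hb hrσ
end

section
/- Let B > 0, μ > 0, μ₁ > 0 and g be real numbers, and set b_n = B·μ^n·μ₁^{√n}·n^g for n ≥ 1. Define c_n = 2·n^{3/2}·((log b_n)/√n − (log b_{n−1})/√(n−1)) for n ≥ 2. Then there is a real constant C such that c_n − n·log μ + g·log n converges to C as n → ∞; equivalently, the transformed sequence d_n = exp(c_n) satisfies d_n·n^g/μ^n → e^C > 0, so that (d_n) has the pure algebraic-singularity asymptotic form D·μ^n·n^{−g} with no stretched-exponential factor. -/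
/-!
Dividing `log b_x = log B + x log μ + √x log μ₁ + g log x` by `√x` turns the stretched-exponential
term into the constant `log μ₁`, which the difference kills; the transform is linear, so it remains
to transform `1`, `x` and `log x`. With `v = √(1 - 1/x)` one has `√(x - 1) = v √x` and
`x (1 - v²) = 1`, which makes these transforms explicit functions of `v`, `log x / x` and
`x log (1 - 1/x)`; letting `v → 1` they behave like `-1`, `x + 1/4` and `2 - log x`. Hence
`C = -log B + (log μ)/4 + 2g`.
-/

open Filter Topology Real

noncomputable def renormalise (φ : ℝ → ℝ) (x : ℝ) : ℝ :=
  2 * x ^ ((3 : ℝ) / 2) * (φ x / √x - φ (x - 1) / √(x - 1))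

section
variable {x : ℝ}

lemma rpow_three_halves (hx : 0 ≤ x) : x ^ ((3 : ℝ) / 2) = x * √x := by
  rw [show (3 : ℝ) / 2 = 1 + 1 / 2 by norm_num, rpow_add' hx (by norm_num), rpow_one,
    sqrt_eq_rpow]

lemma sqrt_sub_one_eq (hx : 0 < x) : √(x - 1) = √(1 - 1 / x) * √x := by
  rw [← sqrt_mul' _ hx.le, sub_mul, one_div_mul_cancel hx.ne', one_mul]

lemma renormalise_eq_mul_sub_div (φ : ℝ → ℝ) (hx : 1 < x) :
    renormalise φ x = 2 * x * (φ x - φ (x - 1) / √(1 - 1 / x)) := by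
  have hx0 : 0 < x := by linarith
  have hs : 0 < √x := sqrt_pos.2 hx0
  rw [renormalise, rpow_three_halves hx0.le, sqrt_sub_one_eq hx0]
  field_simp

lemma renormalise_affine_log (a m k g : ℝ) (hx : 1 < x) :
    renormalise (fun y => a + y * m + √y * k + g * log y) x =
      a * renormalise (fun _ => 1) x + m * renormalise id x + g * renormalise log x := by
  have hs : 0 < √x := sqrt_pos.2 (by linarith)
  have ht : 0 < √(x - 1) := sqrt_pos.2 (by linarith)
  simp only [renormalise, id]
  field_simp
  ring

lemma one_sub_one_div_pos (hx : 1 < x) : 0 < 1 - 1 / x := by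
  rw [sub_pos, div_lt_one (by linarith)]
  exact hx

lemma mul_one_sub_sqrt_one_sub_one_div_sq (hx : 1 < x) : x * (1 - √(1 - 1 / x) ^ 2) = 1 := by
  have hx0 : 0 < x := by linarith
  rw [sq_sqrt (one_sub_one_div_pos hx).le]
  field_simp
  ring

lemma renormalise_one_eq (hx : 1 < x) :
    renormalise (fun _ => 1) x = -2 / (√(1 - 1 / x) * (1 + √(1 - 1 / x))) := by
  have hv : x * (1 - √(1 - 1 / x) ^ 2) = 1 := mul_one_sub_sqrt_one_sub_one_div_sq hx
  have hv0 : 0 < √(1 - 1 / x) := sqrt_pos.2 (one_sub_one_div_pos hx)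
  rw [renormalise_eq_mul_sub_div _ hx]
  set v := √(1 - 1 / x)
  field_simp
  linear_combination -hv

lemma renormalise_id_sub_eq (hx : 1 < x) :
    renormalise id x - x = 1 / (1 + √(1 - 1 / x)) ^ 2 := by
  have hv : x * (1 - √(1 - 1 / x) ^ 2) = 1 := mul_one_sub_sqrt_one_sub_one_div_sq hx
  have hv0 : 0 < √(1 - 1 / x) := sqrt_pos.2 (one_sub_one_div_pos hx)
  rw [renormalise_eq_mul_sub_div _ hx]
  set v := √(1 - 1 / x)
  have hx1 : x - 1 = x * v ^ 2 := by linear_combination hv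
  simp only [id, hx1]
  field_simp
  linear_combination (1 + 2 * x * (1 + v)) * hv

lemma renormalise_log_add_eq (hx : 1 < x) :
    renormalise log x + log x = -(log x / x) * ((√(1 - 1 / x) + 2) /
      (√(1 - 1 / x) * (1 + √(1 - 1 / x)) ^ 2)) - 2 / √(1 - 1 / x) * (x * log (1 - 1 / x)) := by
  have hx0 : 0 < x := by linarith
  have hv : x * (1 - √(1 - 1 / x) ^ 2) = 1 := mul_one_sub_sqrt_one_sub_one_div_sq hx
  have hpos : 0 < 1 - 1 / x := one_sub_one_div_pos hx
  have hv0 : 0 < √(1 - 1 / x) := sqrt_pos.2 hpos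
  have hlog : log (x - 1) = log x + log (1 - 1 / x) := by
    rw [← log_mul hx0.ne' hpos.ne', mul_sub, mul_one_div_cancel hx0.ne', mul_one]
  rw [renormalise_eq_mul_sub_div _ hx, hlog]
  set v := √(1 - 1 / x)
  field_simp
  linear_combination -log x * (v + 2 + 2 * x * (1 + v)) * hv

end

lemma tendsto_sqrt_one_sub_inv : Tendsto (fun x : ℝ => √(1 - 1 / x)) atTop (𝓝 1) := by
  simpa using ((tendsto_const_nhds (x := (1 : ℝ))).sub tendsto_inv_atTop_zero).sqrt

lemma tendsto_renormalise_one : Tendsto (renormalise fun _ => 1) atTop (𝓝 (-1)) := by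
  have hcont : ContinuousAt (fun v : ℝ => -2 / (v * (1 + v))) 1 := by fun_prop (disch := norm_num)
  have hlim := (hcont.tendsto.comp tendsto_sqrt_one_sub_inv).congr' <| by
    filter_upwards [eventually_gt_atTop 1] with x hx
    exact (renormalise_one_eq hx).symm
  convert hlim using 2
  norm_num

lemma tendsto_renormalise_id_sub : Tendsto (fun x => renormalise id x - x) atTop (𝓝 (1 / 4)) := by
  have hcont : ContinuousAt (fun v : ℝ => 1 / (1 + v) ^ 2) 1 := by fun_prop (disch := norm_num)
  have hlim := (hcont.tendsto.comp tendsto_sqrt_one_sub_inv).congr' <| by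
    filter_upwards [eventually_gt_atTop 1] with x hx
    exact (renormalise_id_sub_eq hx).symm
  convert hlim using 2
  norm_num

lemma tendsto_renormalise_log_add : Tendsto (fun x => renormalise log x + log x) atTop (𝓝 2) := by
  have hv := tendsto_sqrt_one_sub_inv
  have hlog_div : Tendsto (fun x => log x / x) atTop (𝓝 0) := by
    simpa using isLittleO_log_id_atTop.tendsto_div_nhds_zero
  have hmul_log : Tendsto (fun x => x * log (1 - 1 / x)) atTop (𝓝 (-1)) := by
    simpa [sub_eq_add_neg, neg_div] using tendsto_mul_log_one_add_div_atTop (-1)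
  have hcont₁ : ContinuousAt (fun v : ℝ => (v + 2) / (v * (1 + v) ^ 2)) 1 := by
    fun_prop (disch := norm_num)
  have hcont₂ : ContinuousAt (fun v : ℝ => 2 / v) 1 := by fun_prop (disch := norm_num)
  have hlim := ((hlog_div.neg.mul (hcont₁.tendsto.comp hv)).sub
    ((hcont₂.tendsto.comp hv).mul hmul_log)).congr' <| by
    filter_upwards [eventually_gt_atTop 1] with x hx
    exact (renormalise_log_add_eq hx).symm
  convert hlim using 2
  norm_num

lemma tendsto_renormalise_affine_log (a m k g : ℝ) :
    Tendsto (fun x => renormalise (fun y => a + y * m + √y * k + g * log y) x - x * m + g * log x)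
      atTop (𝓝 (-a + m / 4 + 2 * g)) := by
  have hlim := ((tendsto_renormalise_one.const_mul a).add
    (tendsto_renormalise_id_sub.const_mul m)).add (tendsto_renormalise_log_add.const_mul g)
  convert hlim.congr' _ using 2
  · ring
  filter_upwards [eventually_gt_atTop 1] with x hx
  rw [renormalise_affine_log a m k g hx]
  ring

lemma log_mul_pow_mul_rpow_mul_rpow {B μ μ₁ : ℝ} (g : ℝ) (hB : 0 < B) (hμ : 0 < μ) (hμ₁ : 0 < μ₁)
    {n : ℕ} (hn : 1 ≤ n) :
    log (B * μ ^ n * μ₁ ^ √(n : ℝ) * (n : ℝ) ^ g) =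
      log B + n * log μ + √(n : ℝ) * log μ₁ + g * log n := by
  have hn0 : (0 : ℝ) < n := by exact_mod_cast hn
  rw [log_mul (by positivity) (by positivity), log_mul (by positivity) (by positivity),
    log_mul hB.ne' (by positivity), log_pow, log_rpow hμ₁, log_rpow hn0]

lemma tendsto_exp_mul_rpow_div_pow {μ g C : ℝ} {u : ℕ → ℝ} (hμ : 0 < μ)
    (h : Tendsto (fun n : ℕ => u n - n * log μ + g * log n) atTop (𝓝 C)) :
    Tendsto (fun n : ℕ => exp (u n) * (n : ℝ) ^ g / μ ^ n) atTop (𝓝 (exp C)) := by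
  refine ((continuous_exp.tendsto C).comp h).congr' ?_
  filter_upwards [eventually_ge_atTop 1] with n hn
  have hn0 : (0 : ℝ) < n := by exact_mod_cast hn
  rw [Function.comp_apply, exp_add, exp_sub, exp_nat_mul, exp_log hμ, mul_comm g,
    ← rpow_def_of_pos hn0]
  ring

/-- Removing the stretched-exponential factor: for `b_n = B μ^n μ₁^{√n} n^g` and
`c_n = 2 n^{3/2} (log b_n/√n − log b_{n-1}/√(n-1))`, the sequence
`c_n − n log μ + g log n` converges to some constant `C`, so that `d_n = exp c_n`
has the pure algebraic form `d_n ~ e^C μ^n n^{-g}`. -/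
theorem renormalised_series (B μ μ₁ g : ℝ) (hB : 0 < B) (hμ : 0 < μ) (hμ₁ : 0 < μ₁)
    (b c : ℕ → ℝ)
    (hb : ∀ n : ℕ, 1 ≤ n → b n = B * μ ^ n * μ₁ ^ Real.sqrt n * (n : ℝ) ^ g)
    (hc : ∀ n : ℕ, 2 ≤ n → c n =
      2 * (n : ℝ) ^ ((3 : ℝ) / 2) *
        (Real.log (b n) / Real.sqrt n - Real.log (b (n - 1)) / Real.sqrt (n - 1 : ℕ))) :
    ∃ C : ℝ,
      Tendsto (fun n : ℕ => c n - n * Real.log μ + g * Real.log n) atTop (nhds C) ∧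
      Tendsto (fun n : ℕ => Real.exp (c n) * (n : ℝ) ^ g / μ ^ n) atTop
        (nhds (Real.exp C)) ∧
      0 < Real.exp C := by
  have hc_eq : ∀ n : ℕ, 2 ≤ n →
      c n = renormalise (fun y => log B + y * log μ + √y * log μ₁ + g * log y) n := by
    intro n hn
    rw [hc n hn, hb n (by omega), hb (n - 1) (by omega),
      log_mul_pow_mul_rpow_mul_rpow g hB hμ hμ₁ (by omega),
      log_mul_pow_mul_rpow_mul_rpow g hB hμ hμ₁ (by omega), Nat.cast_sub (by omega), Nat.cast_one,
      renormalise]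
  have hlim : Tendsto (fun n : ℕ => c n - n * log μ + g * log n) atTop
      (𝓝 (-log B + log μ / 4 + 2 * g)) :=
    ((tendsto_renormalise_affine_log _ _ (log μ₁) _).comp tendsto_natCast_atTop_atTop).congr' <| by
      filter_upwards [eventually_ge_atTop 2] with n hn
      rw [Function.comp_apply, hc_eq n hn]
  exact ⟨_, hlim, tendsto_exp_mul_rpow_div_pow hμ hlim, exp_pos _⟩
end
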